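/- Let X be a random vector in [0,∞)^d satisfying multivariate regular variation: for every Borel set B ⊂ {x ≥ 0 : ‖x‖_∞ > 1} with ν(∂B) = 0, P(X/u ∈ B | ‖X‖_∞ > u) → ν(B) as u → ∞, where ν is extended homogeneously of degree −1 to all Borel sets bounded away from the origin. Let r be a measurable, 1-homogeneous risk functional with Ω_r = {x : r(x) > 1} bounded away from the origin and ν(∂Ω_r) = 0, ν(Ω_r) > 0. Then for any Borel set B ⊂ Ω_r with ν(∂B) = 0, lim_{u→∞} P(X ∈ uB | r(X) > u) = ν(B)/ν(Ω_r). -/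

import Mathlib

/-!
Choose `t > 0` so large that `t • Ω_r` lies in `{‖x‖ > 1}`. For every `S ⊆ Ω_r` the set `t • S`
then falls under the regular variation hypothesis, and homogeneity of `ν` shows that
`P(X ∈ u S) / P(‖X‖ > u / t) → t⁻¹ ν(S)`. Taking `S = B` and `S = Ω_r` and dividing, the common
normalisation `P(‖X‖ > u / t)` and the factor `t⁻¹` cancel, while `{r(X) > u} = {X ∈ u Ω_r}` by
homogeneity of `r`.
-/

open MeasureTheory Set Filter Topology Pointwise

theorem frontier_smul_set₀ {G₀ α : Type*} [GroupWithZero G₀] [MulAction G₀ α]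
    [TopologicalSpace α] [ContinuousConstSMul G₀ α] {c : G₀} (hc : c ≠ 0) (s : Set α) :
    frontier (c • s) = c • frontier s := by
  rw [frontier, closure_smul₀' hc, interior_smul₀ hc, ← smul_set_sdiff₀ hc, frontier]

-- No positivity is needed: if `μ U = 0` then `μ T = 0`, and both sides are `0` as `x / 0 = 0`.
theorem toReal_measure_div_eq_div_div {Ω : Type*} [MeasurableSpace Ω] (μ : Measure Ω)
    [IsFiniteMeasure μ] (S : Set Ω) {T U : Set Ω} (hTU : T ⊆ U) :
    (μ S).toReal / (μ T).toReal =
      ((μ S).toReal / (μ U).toReal) / ((μ T).toReal / (μ U).toReal) := by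
  rcases eq_or_ne (μ U).toReal 0 with hU | hU
  · have hT : μ T = 0 := measure_mono_null hTU ((measureReal_eq_zero_iff).1 hU)
    simp [hU, hT]
  · rw [div_div_div_cancel_right₀ hU]

section Homogeneity

variable {E : Type*} [AddCommGroup E] [Module ℝ E]

theorem inv_div_smul_mem_smul_set_iff {S : Set E} {u t : ℝ} (hu : u ≠ 0) (ht : t ≠ 0) (x : E) :
    (u / t)⁻¹ • x ∈ t • S ↔ x ∈ u • S := by
  rw [← mem_smul_set_iff_inv_smul_mem₀ (div_ne_zero hu ht), smul_smul, div_mul_cancel₀ u ht]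

theorem mem_smul_setOf_one_lt_iff {r : E → ℝ} (hr : ∀ t : ℝ, 0 < t → ∀ x, r (t • x) = t * r x)
    {v : ℝ} (hv : 0 < v) (x : E) : x ∈ v • {y | 1 < r y} ↔ v < r x := by
  rw [mem_smul_set_iff_inv_smul_mem₀ hv.ne', mem_ofPred_eq, hr v⁻¹ (inv_pos.2 hv), inv_mul_eq_div,
    one_lt_div hv]

end Homogeneity

section Norm

variable {E : Type*} [NormedAddCommGroup E]

theorem le_norm_of_mem_closure {S : Set E} {c : ℝ} (hS : ∀ x ∈ S, c < ‖x‖) :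
    ∀ x ∈ closure S, c ≤ ‖x‖ :=
  fun _ hx => closure_minimal (fun y hy => (hS y hy).le)
    (isClosed_le continuous_const continuous_norm) hx

variable [NormedSpace ℝ E]

theorem smul_set_subset_setOf_lt_norm {S : Set E} {c u : ℝ} (hu : 0 < u)
    (hS : ∀ x ∈ S, c < ‖x‖) : u • S ⊆ {x | u * c < ‖x‖} := by
  rintro _ ⟨y, hy, rfl⟩
  rw [mem_ofPred_eq, norm_smul, Real.norm_of_nonneg hu.le]
  exact mul_lt_mul_of_pos_left (hS y hy) hu

variable [MeasurableSpace E] [BorelSpace E]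

theorem tendsto_measure_mem_smul_div_of_regularVariation
    {Ω : Type*} [MeasurableSpace Ω] {μ : Measure Ω} {X : Ω → E} {ν : Measure E}
    (hνhom : ∀ t : ℝ, 0 < t → ∀ B : Set E, MeasurableSet B →
      (∃ ε > 0, ∀ x ∈ B, ε ≤ ‖x‖) → ν (t • B) = ENNReal.ofReal t⁻¹ * ν B)
    (hMRV : ∀ B : Set E, MeasurableSet B → B ⊆ {x | 1 < ‖x‖} → ν (frontier B) = 0 →
      Tendsto (fun u : ℝ => (μ {ω | u⁻¹ • X ω ∈ B}).toReal / (μ {ω | u < ‖X ω‖}).toReal)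
        atTop (𝓝 (ν B).toReal))
    {t : ℝ} (ht : 0 < t) {S : Set E} (hSm : MeasurableSet S) (hS : ∀ x ∈ S, t⁻¹ < ‖x‖)
    (hSfr : ν (frontier S) = 0) :
    Tendsto (fun u : ℝ => (μ {ω | X ω ∈ u • S}).toReal / (μ {ω | u / t < ‖X ω‖}).toReal)
      atTop (𝓝 (t⁻¹ * (ν S).toReal)) := by
  have hscale : ∀ A ⊆ closure S, MeasurableSet A → ν (t • A) = ENNReal.ofReal t⁻¹ * ν A :=
    fun A hA hAm => hνhom t ht A hAm
      ⟨t⁻¹, inv_pos.2 ht, fun x hx => le_norm_of_mem_closure hS x (hA hx)⟩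
  have hsub : t • S ⊆ {x | 1 < ‖x‖} := by
    simpa only [mul_inv_cancel₀ ht.ne'] using smul_set_subset_setOf_lt_norm ht hS
  have hfr : ν (frontier (t • S)) = 0 := by
    rw [frontier_smul_set₀ ht.ne', hscale _ frontier_subset_closure isClosed_frontier.measurableSet,
      hSfr, mul_zero]
  have hlim := (hMRV (t • S) (hSm.const_smul₀ t) hsub hfr).comp (tendsto_id.atTop_div_const ht)
  rw [hscale S subset_closure hSm, ENNReal.toReal_mul, ENNReal.toReal_ofReal (inv_nonneg.2 ht.le)]
    at hlim
  refine hlim.congr' ?_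
  filter_upwards [eventually_gt_atTop 0] with u hu
  simp only [Function.comp_apply, id, inv_div_smul_mem_smul_set_iff hu.ne' ht.ne']

end Norm

theorem stmt1_general {d : ℕ} {Ω : Type*} [MeasurableSpace Ω] (μ : Measure Ω) [IsProbabilityMeasure μ]
    (X : Ω → (Fin d → ℝ))
    (ν : Measure (Fin d → ℝ)) (r : (Fin d → ℝ) → ℝ) (hr : Measurable r)
    (hrhom : ∀ t : ℝ, 0 < t → ∀ x : Fin d → ℝ, r (t • x) = t * r x)
    (hνhom : ∀ t : ℝ, 0 < t → ∀ B : Set (Fin d → ℝ), MeasurableSet B →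
      (∃ ε > 0, ∀ x ∈ B, ε ≤ ‖x‖) → ν (t • B) = ENNReal.ofReal t⁻¹ * ν B)
    (hMRV : ∀ B : Set (Fin d → ℝ), MeasurableSet B → B ⊆ {x | 1 < ‖x‖} →
      ν (frontier B) = 0 →
      Tendsto (fun u : ℝ =>
          (μ {ω | u⁻¹ • X ω ∈ B}).toReal / (μ {ω | u < ‖X ω‖}).toReal)
        atTop (𝓝 (ν B).toReal))
    (hΩaway : ∃ ε > 0, ∀ x ∈ {x : Fin d → ℝ | 1 < r x}, ε ≤ ‖x‖)
    (hΩfr : ν (frontier {x : Fin d → ℝ | 1 < r x}) = 0)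
    (hΩpos : 0 < ν {x : Fin d → ℝ | 1 < r x})
    (hΩfin : ν {x : Fin d → ℝ | 1 < r x} ≠ ⊤) :
    ∀ B : Set (Fin d → ℝ), MeasurableSet B → B ⊆ {x : Fin d → ℝ | 1 < r x} →
      ν (frontier B) = 0 →
      Tendsto (fun u : ℝ =>
          (μ {ω | X ω ∈ u • B}).toReal / (μ {ω | u < r (X ω)}).toReal)
        atTop (𝓝 ((ν B).toReal / (ν {x : Fin d → ℝ | 1 < r x}).toReal)) := by
  intro B hBm hBsub hBfr
  set Ωr := {x : Fin d → ℝ | 1 < r x}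
  obtain ⟨ε, hε, hεΩ⟩ := hΩaway
  have ht : 0 < 2 / ε := by positivity
  have hsep : ∀ x ∈ Ωr, (2 / ε)⁻¹ < ‖x‖ := fun x hx => by
    rw [inv_div]; linarith [hεΩ x hx]
  have hlimB := tendsto_measure_mem_smul_div_of_regularVariation hνhom hMRV ht hBm
    (fun x hx => hsep x (hBsub hx)) hBfr
  have hlimΩ := tendsto_measure_mem_smul_div_of_regularVariation hνhom hMRV ht
    (measurableSet_lt measurable_const hr) hsep hΩfr
  have hΩne : (ν Ωr).toReal ≠ 0 := (ENNReal.toReal_pos hΩpos.ne' hΩfin).ne'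
  have hlim := hlimB.div hlimΩ (mul_ne_zero (inv_ne_zero ht.ne') hΩne)
  rw [mul_div_mul_left _ _ (inv_ne_zero ht.ne')] at hlim
  refine hlim.congr' ?_
  filter_upwards [eventually_gt_atTop 0] with u hu
  have hevent : {ω | u < r (X ω)} = {ω | X ω ∈ u • Ωr} :=
    ext fun ω => (mem_smul_setOf_one_lt_iff hrhom hu (X ω)).symm
  have hnorm : {ω | X ω ∈ u • Ωr} ⊆ {ω | u / (2 / ε) < ‖X ω‖} := fun ω hω => by
    rw [mem_ofPred_eq, div_eq_mul_inv]
    exact smul_set_subset_setOf_lt_norm hu hsep hω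
  rw [Pi.div_apply, hevent, toReal_measure_div_eq_div_div μ _ hnorm]

/-- under multivariate regular variation of `X` with exponent measure `ν`
(extended homogeneously of degree `-1`), for a measurable 1-homogeneous risk functional `r`
with `Ω_r` bounded away from the origin, `ν (∂Ω_r) = 0` and `ν Ω_r > 0`, one has
`P(X ∈ uB | r(X) > u) → ν B / ν Ω_r` as `u → ∞` for every Borel `B ⊆ Ω_r` with `ν (∂B) = 0`. -/
theorem stmt1 {d : ℕ} {Ω : Type*} [MeasurableSpace Ω] (μ : Measure Ω) [IsProbabilityMeasure μ]
    (X : Ω → (Fin d → ℝ)) (hX : Measurable X)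
    (ν : Measure (Fin d → ℝ)) (r : (Fin d → ℝ) → ℝ) (hr : Measurable r)
    (hrhom : ∀ t : ℝ, 0 < t → ∀ x : Fin d → ℝ, r (t • x) = t * r x)
    (hνhom : ∀ t : ℝ, 0 < t → ∀ B : Set (Fin d → ℝ), MeasurableSet B →
      (∃ ε > 0, ∀ x ∈ B, ε ≤ ‖x‖) → ν (t • B) = ENNReal.ofReal t⁻¹ * ν B)
    (hMRV : ∀ B : Set (Fin d → ℝ), MeasurableSet B → B ⊆ {x | 1 < ‖x‖} →
      ν (frontier B) = 0 →
      Tendsto (fun u : ℝ =>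
          (μ {ω | u⁻¹ • X ω ∈ B}).toReal / (μ {ω | u < ‖X ω‖}).toReal)
        atTop (𝓝 (ν B).toReal))
    (hΩaway : ∃ ε > 0, ∀ x ∈ {x : Fin d → ℝ | 1 < r x}, ε ≤ ‖x‖)
    (hΩfr : ν (frontier {x : Fin d → ℝ | 1 < r x}) = 0)
    (hΩpos : 0 < ν {x : Fin d → ℝ | 1 < r x})
    (hΩfin : ν {x : Fin d → ℝ | 1 < r x} ≠ ⊤) :
    ∀ B : Set (Fin d → ℝ), MeasurableSet B → B ⊆ {x : Fin d → ℝ | 1 < r x} →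
      ν (frontier B) = 0 →
      Tendsto (fun u : ℝ =>
          (μ {ω | X ω ∈ u • B}).toReal / (μ {ω | u < r (X ω)}).toReal)
        atTop (𝓝 ((ν B).toReal / (ν {x : Fin d → ℝ | 1 < r x}).toReal)) :=
  stmt1_general μ X ν r hr hrhom hνhom hMRV hΩaway hΩfr hΩpos hΩfin
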